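/- If every separable closed subspace of a Banach space X has the p-sequentially Right property, then X has the p-sequentially Right property. -/

import Mathlib

open Filter Topology NormedSpace Bornology
open scoped ENNReal ContinuousMap ZeroAtInfty

/-- A sequence is weakly null. -/
def WeaklyNull {X : Type*} [NormedAddCommGroup X] [NormedSpace ℝ X] (x : ℕ → X) : Prop :=
  ∀ f : StrongDual ℝ X, Tendsto (fun n => f (x n)) atTop (𝓝 0)

/-- A sequence is weakly `p`-summable; for `p = ∞` this means weakly null. -/
def WeaklyPSummable {X : Type*} [NormedAddCommGroup X] [NormedSpace ℝ X] (p : ℝ≥0∞)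
    (x : ℕ → X) : Prop :=
  if p = ∞ then WeaklyNull x else ∀ f : StrongDual ℝ X, Memℓp (fun n => f (x n)) p

/-- A Dunford-Pettis subset of a Banach space: a bounded set on which every weakly null
sequence of functionals converges uniformly to zero. -/
def IsDunfordPettisSet {X : Type*} [NormedAddCommGroup X] [NormedSpace ℝ X] (A : Set X) : Prop :=
  IsBounded A ∧ ∀ f : ℕ → StrongDual ℝ X, WeaklyNull f →
    Tendsto (fun n => ⨆ a : A, |f n a.1|) atTop (𝓝 0)

/-- A `p`-Right null sequence: weakly `p`-summable and a Dunford-Pettis set. -/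
def PRightNull {X : Type*} [NormedAddCommGroup X] [NormedSpace ℝ X] (p : ℝ≥0∞)
    (x : ℕ → X) : Prop :=
  WeaklyPSummable p x ∧ IsDunfordPettisSet (Set.range x)

/-- A `p`-Right subset of the dual: every `p`-Right null sequence in `X` converges to `0`
uniformly on `K`. -/
def IsPRightSet {X : Type*} [NormedAddCommGroup X] [NormedSpace ℝ X] (p : ℝ≥0∞)
    (K : Set (StrongDual ℝ X)) : Prop :=
  IsBounded K ∧ ∀ x : ℕ → X, PRightNull p x →
    Tendsto (fun n => ⨆ f : K, |f.1 (x n)|) atTop (𝓝 0)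

/-- A `p`-Right* subset of `X`: every `p`-Right null sequence in `X*` converges to `0`
uniformly on `K`. -/
def IsPRightStarSet {X : Type*} [NormedAddCommGroup X] [NormedSpace ℝ X] (p : ℝ≥0∞)
    (K : Set X) : Prop :=
  IsBounded K ∧ ∀ f : ℕ → StrongDual ℝ X, PRightNull p f →
    Tendsto (fun n => ⨆ a : K, |f n a.1|) atTop (𝓝 0)

/-- A `p`-(V) subset of the dual. -/
def IsPVSet {X : Type*} [NormedAddCommGroup X] [NormedSpace ℝ X] (p : ℝ≥0∞)
    (K : Set (StrongDual ℝ X)) : Prop :=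
  IsBounded K ∧ ∀ x : ℕ → X, WeaklyPSummable p x →
    Tendsto (fun n => ⨆ f : K, |f.1 (x n)|) atTop (𝓝 0)

/-- A `p`-(V*) subset of `X`. -/
def IsPVStarSet {X : Type*} [NormedAddCommGroup X] [NormedSpace ℝ X] (p : ℝ≥0∞)
    (K : Set X) : Prop :=
  IsBounded K ∧ ∀ f : ℕ → StrongDual ℝ X, WeaklyPSummable p f →
    Tendsto (fun n => ⨆ a : K, |f n a.1|) atTop (𝓝 0)

/-- A Dunford-Pettis `p`-convergent operator maps `p`-Right null sequences to norm
null sequences. -/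
def DPpConvergent {X Y : Type*} [NormedAddCommGroup X] [NormedSpace ℝ X] [NormedAddCommGroup Y]
    [NormedSpace ℝ Y] (p : ℝ≥0∞) (T : X →L[ℝ] Y) : Prop :=
  ∀ x : ℕ → X, PRightNull p x → Tendsto (fun n => ‖T (x n)‖) atTop (𝓝 0)

/-- The adjoint of a bounded operator between normed spaces. -/
noncomputable def adjointOp {X Y : Type*} [NormedAddCommGroup X] [NormedSpace ℝ X]
    [NormedAddCommGroup Y] [NormedSpace ℝ Y] (T : X →L[ℝ] Y) : StrongDual ℝ Y →L[ℝ] StrongDual ℝ X :=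
  (ContinuousLinearMap.compL ℝ X Y ℝ).flip T

/-- Weak convergence of a sequence. -/
def WeaklyConvTo {X : Type*} [NormedAddCommGroup X] [NormedSpace ℝ X] (x : ℕ → X) (a : X) : Prop :=
  ∀ f : StrongDual ℝ X, Tendsto (fun n => f (x n)) atTop (𝓝 (f a))

/-- A relatively weakly compact set (sequentially): every sequence in `A` has a weakly
convergent subsequence with limit in the space. -/
def RelWeaklyCompact {X : Type*} [NormedAddCommGroup X] [NormedSpace ℝ X] (A : Set X) : Prop :=
  ∀ x : ℕ → X, (∀ n, x n ∈ A) →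
    ∃ a : X, ∃ φ : ℕ → ℕ, StrictMono φ ∧ WeaklyConvTo (fun n => x (φ n)) a

/-- A relatively weakly `q`-compact set: every sequence in `A` has a weakly `q`-convergent
subsequence with limit in the space. -/
def RelWeaklyQCompact {X : Type*} [NormedAddCommGroup X] [NormedSpace ℝ X] (q : ℝ≥0∞)
    (A : Set X) : Prop :=
  ∀ x : ℕ → X, (∀ n, x n ∈ A) →
    ∃ a : X, ∃ φ : ℕ → ℕ, StrictMono φ ∧ WeaklyPSummable q (fun n => x (φ n) - a)

/-- The `p`-sequentially Right property: every `p`-Right subset of the dual is relatively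
weakly compact. -/
def PSR (p : ℝ≥0∞) (X : Type*) [NormedAddCommGroup X] [NormedSpace ℝ X] : Prop :=
  ∀ K : Set (StrongDual ℝ X), IsPRightSet p K → RelWeaklyCompact K

/-- The `p`-sequentially Right* property: every `p`-Right* subset is relatively weakly
compact. -/
def PSRStar (p : ℝ≥0∞) (X : Type*) [NormedAddCommGroup X] [NormedSpace ℝ X] : Prop :=
  ∀ K : Set X, IsPRightStarSet p K → RelWeaklyCompact K

section Aux

variable {X : Type*} [NormedAddCommGroup X] [NormedSpace ℝ X]

lemma adjointOp_apply' {Y : Type*} [NormedAddCommGroup Y] [NormedSpace ℝ Y]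
    (T : X →L[ℝ] Y) (f : StrongDual ℝ Y) (x : X) : adjointOp T f x = f (T x) := rfl

lemma norm_adjointOp_subtypeL_le (Z : Submodule ℝ X) (f : StrongDual ℝ X) :
    ‖adjointOp Z.subtypeL f‖ ≤ ‖f‖ := by
  refine ContinuousLinearMap.opNorm_le_bound _ (norm_nonneg f) fun z => ?_
  calc ‖f (Z.subtypeL z)‖ ≤ ‖f‖ * ‖Z.subtypeL z‖ := f.le_opNorm _
  _ = ‖f‖ * ‖z‖ := rfl

lemma iSup_range_eq {Y : Type*} (F : Y → ℝ) (x : ℕ → Y) :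
    (⨆ a : (Set.range x), F a.1) = ⨆ n, F (x n) := by
  rw [iSup, iSup]
  congr 1
  ext r
  constructor
  · rintro ⟨⟨y, n, rfl⟩, rfl⟩
    exact ⟨n, rfl⟩
  · rintro ⟨n, rfl⟩
    exact ⟨⟨x n, n, rfl⟩, rfl⟩

lemma weaklyNull_restrict {Z : Submodule ℝ X} {g : ℕ → StrongDual ℝ X} (hg : WeaklyNull g) :
    WeaklyNull (fun n => adjointOp Z.subtypeL (g n)) := fun Φ =>
  hg (Φ.comp (adjointOp Z.subtypeL))

lemma weaklyPSummable_incl {p : ℝ≥0∞} {Z : Submodule ℝ X} {z : ℕ → Z}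
    (hz : WeaklyPSummable p z) : WeaklyPSummable p (fun n => (z n : X)) := by
  unfold WeaklyPSummable at hz ⊢
  split_ifs with hp
  · rw [if_pos hp] at hz
    intro f
    exact hz (adjointOp Z.subtypeL f)
  · rw [if_neg hp] at hz
    intro f
    exact hz (adjointOp Z.subtypeL f)

lemma isDP_incl {Z : Submodule ℝ X} {z : ℕ → Z}
    (hz : IsDunfordPettisSet (Set.range z)) :
    IsDunfordPettisSet (Set.range (fun n => (z n : X))) := by
  obtain ⟨hb, hdp⟩ := hz
  constructor
  · obtain ⟨C, hC⟩ := (isBounded_iff_forall_norm_le).1 hb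
    refine (isBounded_iff_forall_norm_le).2 ⟨C, ?_⟩
    rintro y ⟨n, rfl⟩
    exact hC _ ⟨n, rfl⟩
  · intro g hg
    have h2 := hdp (fun m => adjointOp Z.subtypeL (g m)) (weaklyNull_restrict hg)
    have e1 : ∀ m, (⨆ a : (Set.range (fun n => (z n : X))), |g m a.1|)
        = ⨆ n, |g m (z n : X)| := fun m => iSup_range_eq (fun y => |g m y|) _
    have e2 : ∀ m, (⨆ a : (Set.range z), |(adjointOp Z.subtypeL (g m)) a.1|)
        = ⨆ n, |g m (z n : X)| :=
      fun m => iSup_range_eq (fun w : Z => |(adjointOp Z.subtypeL (g m)) w|) z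
    simp only [e1]
    simp only [e2] at h2
    exact h2

lemma pRightNull_incl {p : ℝ≥0∞} {Z : Submodule ℝ X} {z : ℕ → Z} (hz : PRightNull p z) :
    PRightNull p (fun n => (z n : X)) :=
  ⟨weaklyPSummable_incl hz.1, isDP_incl hz.2⟩

lemma isPRightSet_image {p : ℝ≥0∞} {Z : Submodule ℝ X} {K : Set (StrongDual ℝ X)}
    (hK : IsPRightSet p K) : IsPRightSet p ((adjointOp Z.subtypeL) '' K) := by
  obtain ⟨hb, hmain⟩ := hK
  obtain ⟨C, hC⟩ := isBounded_iff_forall_norm_le.1 hb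
  refine ⟨?_, ?_⟩
  · refine isBounded_iff_forall_norm_le.2 ⟨C, ?_⟩
    rintro y ⟨f, hf, rfl⟩
    exact (norm_adjointOp_subtypeL_le Z f).trans (hC f hf)
  · intro z hz
    have h0 := hmain (fun n => (z n : X)) (pRightNull_incl hz)
    refine squeeze_zero (fun n => Real.iSup_nonneg fun g => abs_nonneg _) (fun n => ?_) h0
    refine Real.iSup_le (fun g => ?_) (Real.iSup_nonneg fun f => abs_nonneg _)
    obtain ⟨f, hf, he⟩ := g.2
    have hbdd : BddAbove (Set.range fun f : K => |f.1 ((z n : X))|) := by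
      refine ⟨C * ‖(z n : X)‖, ?_⟩
      rintro r ⟨f, rfl⟩
      calc |f.1 ((z n : X))| ≤ ‖f.1‖ * ‖(z n : X)‖ := f.1.le_opNorm _
      _ ≤ C * ‖(z n : X)‖ := by
          exact mul_le_mul_of_nonneg_right (hC f.1 f.2) (norm_nonneg _)
    have he2 : |g.1 (z n)| = |f ((z n : X))| := by rw [← he]; rfl
    rw [he2]
    exact le_ciSup hbdd ⟨f, hf⟩

end Aux

set_option maxHeartbeats 2000000 in
/-- if every separable closed subspace of `X` has the `p`-sequentially Right
property, then so does `X`. -/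
theorem stmt12 {p : ℝ≥0∞} (hp : 1 ≤ p) {X : Type*} [NormedAddCommGroup X] [NormedSpace ℝ X]
    [CompleteSpace X]
    (h : ∀ Z : Submodule ℝ X, IsClosed (Z : Set X) → TopologicalSpace.SeparableSpace Z →
      PSR p Z) :
    PSR p X := by
  intro K hK f hfK
  classical
  -- the separable subspace `W` of the dual generated by the sequence
  set W : Submodule ℝ (StrongDual ℝ X) := (Submodule.span ℝ (Set.range f)).topologicalClosure with hW
  have hWclosed : IsClosed (W : Set (StrongDual ℝ X)) := Submodule.isClosed_topologicalClosure _
  have hfW : ∀ n, f n ∈ W := fun n =>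
    Submodule.le_topologicalClosure _ (Submodule.subset_span ⟨n, rfl⟩)
  have hWsep : TopologicalSpace.IsSeparable (W : Set (StrongDual ℝ X)) := by
    have h1 : TopologicalSpace.IsSeparable
        ((Submodule.span ℝ (Set.range f)) : Set (StrongDual ℝ X)) :=
      (Set.countable_range f).isSeparable.span
    have h2 := h1.closure
    rwa [← Submodule.topologicalClosure_coe] at h2
  obtain ⟨Cd, hCdc, hCdd⟩ := hWsep
  -- a countable norming set for `W`
  have hex : ∀ (c : StrongDual ℝ X) (k : ℕ), ∃ x : X, ‖x‖ ≤ 1 ∧ ‖c‖ - 1/(k+1) < ‖c x‖ := by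
    intro c k
    rcases lt_or_ge (‖c‖ - 1/(k+1)) 0 with hneg | hpos
    · exact ⟨0, by simp, by simpa using hneg⟩
    · have hr : ‖c‖ - 1/(k+1) < ‖c‖ := by
        have : (0:ℝ) < 1/(k+1) := by positivity
        linarith
      obtain ⟨x, hx1, hx2⟩ := c.exists_lt_apply_of_lt_opNorm hr
      exact ⟨x, hx1.le, hx2⟩
  choose xsel hxsel1 hxsel2 using hex
  set D : Set X := Set.image2 xsel Cd Set.univ with hD
  have hDc : D.Countable := hCdc.image2 Set.countable_univ _
  -- the separable closed subspace `Z` of `X`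
  set Z : Submodule ℝ X := (Submodule.span ℝ D).topologicalClosure with hZ
  have hZclosed : IsClosed (Z : Set X) := Submodule.isClosed_topologicalClosure _
  have hZsep : TopologicalSpace.SeparableSpace Z := by
    have h1 : TopologicalSpace.IsSeparable ((Submodule.span ℝ D) : Set X) :=
      hDc.isSeparable.span
    have h2 := h1.closure
    rw [← Submodule.topologicalClosure_coe] at h2
    exact h2.separableSpace
  have hDZ : ∀ x ∈ D, x ∈ Z := fun x hx =>
    Submodule.le_topologicalClosure _ (Submodule.subset_span hx)
  -- the restriction map
  set ρ : StrongDual ℝ X →L[ℝ] StrongDual ℝ Z := adjointOp Z.subtypeL with hρ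
  -- `ρ` is isometric on `W`
  have hlow : ∀ w ∈ W, ‖w‖ ≤ ‖ρ w‖ := by
    intro w hw
    refine le_of_forall_pos_le_add (fun ε hε => ?_)
    have hw' : w ∈ closure Cd := hCdd hw
    obtain ⟨c, hc, hwc⟩ := Metric.mem_closure_iff.1 hw' (ε/3) (by positivity)
    rw [dist_eq_norm] at hwc
    obtain ⟨k, hk⟩ := exists_nat_one_div_lt (show (0:ℝ) < ε/3 by positivity)
    have hxD : xsel c k ∈ D := Set.mem_image2_of_mem hc (Set.mem_univ k)
    have hxZ : xsel c k ∈ Z := hDZ _ hxD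
    set x : X := xsel c k
    have h1 : ‖w‖ - ‖c‖ ≤ ‖w - c‖ := norm_sub_norm_le _ _
    have h2 : ‖c‖ - 1/(k+1) < ‖c x‖ := hxsel2 c k
    have h3 : ‖c x‖ ≤ ‖w x‖ + ‖(c - w) x‖ := by
      have : c x = w x + (c - w) x := by simp
      rw [this]
      exact norm_add_le _ _
    have h4 : ‖(c - w) x‖ ≤ ‖c - w‖ := by
      calc ‖(c - w) x‖ ≤ ‖c - w‖ * ‖x‖ := (c - w).le_opNorm x
      _ ≤ ‖c - w‖ * 1 := by
          exact mul_le_mul_of_nonneg_left (hxsel1 c k) (norm_nonneg _)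
      _ = ‖c - w‖ := mul_one _
    have h5 : ‖w x‖ ≤ ‖ρ w‖ := by
      have : ‖(ρ w) (⟨x, hxZ⟩ : Z)‖ ≤ ‖ρ w‖ := by
        refine ContinuousLinearMap.unit_le_opNorm _ _ ?_
        exact hxsel1 c k
      exact this
    have h6 : ‖c - w‖ = ‖w - c‖ := by rw [← norm_neg]; congr 1; abel
    have hk' : 1/((k:ℝ)+1) < ε/3 := hk
    linarith
  have hupp : ∀ w : StrongDual ℝ X, ‖ρ w‖ ≤ ‖w‖ := norm_adjointOp_subtypeL_le Z
  -- the isometric embedding of `W` into the dual of `Z`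
  set e : W →ₗᵢ[ℝ] StrongDual ℝ Z :=
    { toLinearMap := (ρ.comp W.subtypeL).toLinearMap
      norm_map' := fun w => le_antisymm (hupp _) (hlow _ w.2) } with he
  haveI : CompleteSpace W := hWclosed.completeSpace_coe
  set S : Submodule ℝ (StrongDual ℝ Z) := LinearMap.range e.toLinearMap with hS
  have hSclosed : IsClosed (S : Set (StrongDual ℝ Z)) := by
    have h1 := (e.isometry.isUniformInducing.isComplete_range).isClosed
    have h2 : (S : Set (StrongDual ℝ Z)) = Set.range e := by
      rw [hS, LinearMap.coe_range]
      rfl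
    rw [h2]
    exact h1
  -- apply the hypothesis to `Z`
  have hPSR : PSR p Z := h Z hZclosed hZsep
  have hK' : IsPRightSet p (ρ '' K) := isPRightSet_image hK
  obtain ⟨g, φ, hφ, hconv⟩ := hPSR (ρ '' K) hK' (fun n => ρ (f n))
    (fun n => ⟨f n, hfK n, rfl⟩)
  -- the weak limit lies in the image of `W`
  have hgS : g ∈ S := by
    by_contra hgS
    obtain ⟨Φ, u, hu1, hu2⟩ := geometric_hahn_banach_closed_point S.convex hSclosed hgS
    have hΦ0 : ∀ s ∈ S, Φ s = 0 := by
      intro s hs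
      by_contra hs0
      have hmem : ((u+1)/Φ s) • s ∈ S := S.smul_mem _ hs
      have hlt := hu1 _ hmem
      rw [map_smul, smul_eq_mul, div_mul_cancel₀ _ hs0] at hlt
      linarith
    have h0u : 0 < u := by
      have := hu1 0 S.zero_mem
      simpa using this
    have hc := hconv Φ
    have hz : ∀ n, Φ (ρ (f (φ n))) = 0 := fun n => hΦ0 _ ⟨⟨f (φ n), hfW _⟩, rfl⟩
    rw [show (fun n => Φ (ρ (f (φ n)))) = fun _ => (0:ℝ) from funext hz] at hc
    have : (0:ℝ) = Φ g := tendsto_nhds_unique tendsto_const_nhds hc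
    linarith
  obtain ⟨w₀, hw₀⟩ := hgS
  refine ⟨(w₀ : StrongDual ℝ X), φ, hφ, ?_⟩
  intro F
  -- extend `F ∘ (ρ|_W)⁻¹` from `S` to the dual of `Z` by Hahn-Banach
  set eqv := LinearIsometry.equivRange (E := StrongDual ℝ Z) (F := W) e with heqv
  set h₀ : S →L[ℝ] ℝ := (F.comp W.subtypeL).comp
    ((eqv.symm.toContinuousLinearEquiv : S ≃L[ℝ] W) : S →L[ℝ] W) with hh₀
  obtain ⟨G, hG, -⟩ := exists_extension_norm_eq (𝕜 := ℝ) (E := StrongDual ℝ Z) S h₀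
  have key : ∀ w : W, G (e w) = F (w : StrongDual ℝ X) := by
    intro w
    have hmem : e w ∈ S := ⟨w, rfl⟩
    have h1 := hG ⟨e w, hmem⟩
    have h2 : eqv.symm ⟨e w, hmem⟩ = w := by
      have h3 : eqv w = ⟨e w, hmem⟩ :=
        Subtype.ext (LinearIsometry.equivRange_apply_coe e w)
      rw [← h3, LinearIsometryEquiv.symm_apply_apply]
    rw [h1]
    rw [hh₀]
    simp only [ContinuousLinearMap.coe_comp', Function.comp_apply,
      ContinuousLinearEquiv.coe_coe, LinearIsometryEquiv.coe_toContinuousLinearEquiv]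
    rw [h2]
    rfl
  have hc := hconv G
  have hρe : ∀ n, ρ (f (φ n)) = e ⟨f (φ n), hfW _⟩ := fun n => rfl
  have hGg : G g = F (w₀ : StrongDual ℝ X) := by
    have : g = e w₀ := hw₀.symm
    rw [this]
    exact key w₀
  have hfun : (fun n => G (ρ (f (φ n)))) = fun n => F (f (φ n)) := by
    funext n
    rw [hρe n, key]
  rw [hfun, hGg] at hc
  exact hc
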